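/- Let ν > 2 and set k = √(ν² − 4)/ν. Then ∫₀^∞ ( √(ν² − 2 + 2·cosh(2s)) − eˢ ) ds = ν·(K(k) − E(k)) + 1, where the integrand is integrable on (0,∞). -/

import Mathlib

/-!
Write `W(s) = √(ν² + 4 sinh² s) = √(ν² - 2 + 2 cosh 2s)`. The Gudermannian substitution
`θ = arcsin (tanh s)`, with `sin θ = tanh s` and `dθ = ds / cosh s`, turns
`ν (K(k) - E(k))` into `∫₀^∞ (ν² / W - W / cosh² s) ds`, because
`√(1 - k² tanh² s) = W / (ν cosh s)` when `ν² (1 - k²) = 4`.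
The difference `(W - eˢ) - (ν² / W - W / cosh² s)` is the derivative of
`tanh s · (W - eˢ) - 1 / cosh s`, which is `-1` at `0` and tends to `0` at infinity.
-/

open Real MeasureTheory

/-- Complete elliptic integral of the first kind. -/
noncomputable def ellipticK (k : ℝ) : ℝ :=
  ∫ θ in (0:ℝ)..(Real.pi / 2), 1 / Real.sqrt (1 - k ^ 2 * Real.sin θ ^ 2)

/-- Complete elliptic integral of the second kind. -/
noncomputable def ellipticE (k : ℝ) : ℝ :=
  ∫ θ in (0:ℝ)..(Real.pi / 2), Real.sqrt (1 - k ^ 2 * Real.sin θ ^ 2)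

open Set Filter Topology

noncomputable def gudermannian (s : ℝ) : ℝ := arcsin (tanh s)

lemma sin_gudermannian (s : ℝ) : sin (gudermannian s) = tanh s :=
  sin_arcsin (neg_one_lt_tanh s).le (tanh_lt_one s).le

lemma hasDerivAt_tanh (s : ℝ) : HasDerivAt tanh (cosh s ^ 2)⁻¹ s := by
  rw [show (tanh : ℝ → ℝ) = fun x => sinh x / cosh x from funext tanh_eq_sinh_div_cosh]
  refine ((hasDerivAt_sinh s).div (hasDerivAt_cosh s) (cosh_pos s).ne').congr_deriv ?_
  rw [← sq, ← sq, cosh_sq_sub_sinh_sq, one_div]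

lemma hasDerivAt_gudermannian (s : ℝ) : HasDerivAt gudermannian (cosh s)⁻¹ s := by
  have h := (hasDerivAt_arcsin (neg_one_lt_tanh s).ne' (tanh_lt_one s).ne).comp s
    (hasDerivAt_tanh s)
  have hsech : 1 - tanh s ^ 2 = (cosh s)⁻¹ ^ 2 := by
    rw [tanh_eq_sinh_div_cosh]
    field_simp
    linear_combination cosh_sq_sub_sinh_sq s
  refine h.congr_deriv ?_
  rw [hsech, sqrt_sq (inv_pos.2 (cosh_pos s)).le]
  field_simp

lemma gudermannian_injective : Function.Injective gudermannian := fun _ _ h =>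
  tanh_injective <| injOn_arcsin ⟨(neg_one_lt_tanh _).le, (tanh_lt_one _).le⟩
    ⟨(neg_one_lt_tanh _).le, (tanh_lt_one _).le⟩ h

lemma gudermannian_image_Ioi_zero : gudermannian '' Ioi 0 = Ioo 0 (π / 2) := by
  ext θ
  constructor
  · rintro ⟨s, hs, rfl⟩
    have htanh : 0 < tanh s := by
      rw [tanh_eq_sinh_div_cosh]; exact div_pos (sinh_pos_iff.2 hs) (cosh_pos s)
    exact ⟨arcsin_pos.2 htanh, arcsin_lt_pi_div_two.2 (tanh_lt_one s)⟩
  · rintro ⟨hθ₀, hθ₁⟩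
    have hsin : sin θ ∈ Ioo 0 1 := by
      refine ⟨sin_pos_of_pos_of_lt_pi hθ₀ (by linarith [pi_pos]), ?_⟩
      rw [← sin_pi_div_two]
      exact strictMonoOn_sin ⟨by linarith, hθ₁.le⟩ ⟨by linarith [pi_pos], le_rfl⟩ hθ₁
    refine ⟨artanh (sin θ), artanh_pos hsin, ?_⟩
    rw [gudermannian, tanh_artanh ⟨by linarith [hsin.1], hsin.2⟩]
    exact arcsin_sin (by linarith) hθ₁.le

section Substitution

variable {E : Type*} [NormedAddCommGroup E] [NormedSpace ℝ E]

lemma integrableOn_Ioo_zero_pi_div_two_iff_gudermannian (f : ℝ → E) :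
    IntegrableOn f (Ioo 0 (π / 2)) ↔
      IntegrableOn (fun s => (cosh s)⁻¹ • f (gudermannian s)) (Ioi 0) := by
  rw [← gudermannian_image_Ioi_zero, integrableOn_image_iff_integrableOn_abs_deriv_smul
    measurableSet_Ioi (fun s _ => (hasDerivAt_gudermannian s).hasDerivWithinAt)
    gudermannian_injective.injOn]
  simp only [abs_of_pos (inv_pos.2 (cosh_pos _))]

lemma integral_Ioo_zero_pi_div_two_eq_gudermannian (f : ℝ → E) :
    ∫ θ in Ioo 0 (π / 2), f θ = ∫ s in Ioi 0, (cosh s)⁻¹ • f (gudermannian s) := by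
  rw [← gudermannian_image_Ioi_zero, integral_image_eq_integral_abs_deriv_smul
    measurableSet_Ioi (fun s _ => (hasDerivAt_gudermannian s).hasDerivWithinAt)
    gudermannian_injective.injOn]
  simp only [abs_of_pos (inv_pos.2 (cosh_pos _))]

end Substitution

noncomputable def sqrtSqAddFourSinhSq (ν s : ℝ) : ℝ := √(ν ^ 2 + 4 * sinh s ^ 2)

lemma sqrt_sub_two_add_two_cosh_two_mul (ν s : ℝ) :
    √(ν ^ 2 - 2 + 2 * cosh (2 * s)) = sqrtSqAddFourSinhSq ν s := by
  rw [sqrtSqAddFourSinhSq, cosh_two_mul, cosh_sq]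
  ring_nf

lemma sq_sqrtSqAddFourSinhSq (ν s : ℝ) :
    sqrtSqAddFourSinhSq ν s ^ 2 = ν ^ 2 + 4 * sinh s ^ 2 :=
  sq_sqrt (by positivity)

lemma sqrtSqAddFourSinhSq_pos {ν : ℝ} (hν : ν ≠ 0) (s : ℝ) :
    0 < sqrtSqAddFourSinhSq ν s :=
  sqrt_pos.2 (by positivity)

lemma continuous_sqrtSqAddFourSinhSq (ν : ℝ) : Continuous (sqrtSqAddFourSinhSq ν) := by
  unfold sqrtSqAddFourSinhSq; fun_prop

lemma hasDerivAt_sqrtSqAddFourSinhSq {ν : ℝ} (hν : ν ≠ 0) (s : ℝ) :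
    HasDerivAt (sqrtSqAddFourSinhSq ν)
      (4 * sinh s * cosh s / sqrtSqAddFourSinhSq ν s) s := by
  have hrad : ν ^ 2 + 4 * sinh s ^ 2 ≠ 0 := by positivity
  refine (((hasDerivAt_sinh s).fun_pow 2).const_mul 4 |>.const_add (ν ^ 2) |>.sqrt hrad)
    |>.congr_deriv ?_
  unfold sqrtSqAddFourSinhSq
  field_simp
  ring

lemma abs_sqrtSqAddFourSinhSq_sub_exp_le (ν : ℝ) {s : ℝ} (hs : 0 ≤ s) :
    |sqrtSqAddFourSinhSq ν s - exp s| ≤ (|ν ^ 2 - 2| + 1) * exp (-s) := by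
  set W := sqrtSqAddFourSinhSq ν s
  have hW : 0 ≤ W := sqrt_nonneg _
  have hdiff : (W - exp s) * (W + exp s) = ν ^ 2 - 2 + exp (-s) ^ 2 := by
    have hsinh : 2 * sinh s = exp s - exp (-s) := by rw [sinh_eq]; ring
    have hexp : exp s * exp (-s) = 1 := by rw [← exp_add, add_neg_cancel, exp_zero]
    linear_combination sq_sqrtSqAddFourSinhSq ν s + (2 * sinh s + exp s - exp (-s)) * hsinh
      - 2 * hexp
  have hexp_neg : exp (-s) ≤ 1 := exp_le_one_iff.2 (neg_nonpos.2 hs)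
  have hbound : |ν ^ 2 - 2 + exp (-s) ^ 2| ≤ |ν ^ 2 - 2| + 1 := by
    refine (abs_add_le _ _).trans ?_
    rw [abs_of_nonneg (sq_nonneg (exp (-s)))]
    gcongr
    exact pow_le_one₀ (exp_pos _).le hexp_neg
  calc |W - exp s| = |ν ^ 2 - 2 + exp (-s) ^ 2| / (W + exp s) := by
        rw [← hdiff, abs_mul, abs_of_pos (by positivity : 0 < W + exp s)]
        field_simp
    _ ≤ (|ν ^ 2 - 2| + 1) / exp s :=
        div_le_div₀ (by positivity) hbound (exp_pos s) (by linarith)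
    _ = (|ν ^ 2 - 2| + 1) * exp (-s) := by rw [exp_neg, div_eq_mul_inv]

lemma integrableOn_sqrtSqAddFourSinhSq_sub_exp (ν : ℝ) :
    IntegrableOn (fun s => sqrtSqAddFourSinhSq ν s - exp s) (Ioi 0) := by
  refine Integrable.mono' ((exp_neg_integrableOn_Ioi 0 one_pos).const_mul (|ν ^ 2 - 2| + 1))
    ((continuous_sqrtSqAddFourSinhSq ν).sub continuous_exp).aestronglyMeasurable ?_
  refine (ae_restrict_iff' measurableSet_Ioi).2 (ae_of_all _ fun s hs => ?_)
  rw [norm_eq_abs, neg_one_mul]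
  exact abs_sqrtSqAddFourSinhSq_sub_exp_le ν (le_of_lt hs)

lemma tendsto_sqrtSqAddFourSinhSq_sub_exp (ν : ℝ) :
    Tendsto (fun s => sqrtSqAddFourSinhSq ν s - exp s) atTop (𝓝 0) := by
  have hdecay := tendsto_exp_neg_atTop_nhds_zero.const_mul (|ν ^ 2 - 2| + 1)
  rw [mul_zero] at hdecay
  refine squeeze_zero_norm' ?_ hdecay
  filter_upwards [eventually_ge_atTop 0] with s hs
  exact abs_sqrtSqAddFourSinhSq_sub_exp_le ν hs

lemma hasDerivAt_tanh_mul_sqrtSqAddFourSinhSq_sub_exp_sub_inv_cosh {ν : ℝ} (hν : ν ≠ 0)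
    (s : ℝ) :
    HasDerivAt (fun s => tanh s * (sqrtSqAddFourSinhSq ν s - exp s) - (cosh s)⁻¹)
      ((sqrtSqAddFourSinhSq ν s - exp s)
        - (ν ^ 2 / sqrtSqAddFourSinhSq ν s - sqrtSqAddFourSinhSq ν s / cosh s ^ 2)) s := by
  have hW := sqrtSqAddFourSinhSq_pos hν s
  have hcosh := cosh_pos s
  have hdiff := (hasDerivAt_sqrtSqAddFourSinhSq hν s).fun_sub (hasDerivAt_exp s)
  refine ((hasDerivAt_tanh s).mul hdiff |>.sub ((hasDerivAt_cosh s).inv hcosh.ne')).congr_deriv ?_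
  rw [tanh_eq_sinh_div_cosh, ← cosh_add_sinh]
  field_simp
  linear_combination sqrtSqAddFourSinhSq ν s * cosh s * cosh_sq_sub_sinh_sq s
    - cosh s ^ 2 * sq_sqrtSqAddFourSinhSq ν s

lemma integral_sqrtSqAddFourSinhSq_sub_exp {ν : ℝ} (hν : ν ≠ 0)
    (hint : IntegrableOn
      (fun s => ν ^ 2 / sqrtSqAddFourSinhSq ν s - sqrtSqAddFourSinhSq ν s / cosh s ^ 2)
      (Ioi 0)) :
    ∫ s in Ioi 0, (sqrtSqAddFourSinhSq ν s - exp s) =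
      (∫ s in Ioi 0, (ν ^ 2 / sqrtSqAddFourSinhSq ν s - sqrtSqAddFourSinhSq ν s / cosh s ^ 2))
        + 1 := by
  have hlim : Tendsto (fun s => tanh s * (sqrtSqAddFourSinhSq ν s - exp s) - (cosh s)⁻¹)
      atTop (𝓝 0) := by
    have htanh : ∀ s, ‖tanh s‖ ≤ 1 := fun s => (abs_tanh_lt_one s).le
    have hcosh : Tendsto cosh atTop atTop := tendsto_atTop_mono
      (fun s => (cosh_eq s ▸ by linarith [exp_pos (-s)] : exp s / 2 ≤ cosh s))
      (tendsto_exp_atTop.atTop_div_const two_pos)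
    simpa [mul_comm] using ((tendsto_sqrtSqAddFourSinhSq_sub_exp ν).zero_mul_isBoundedUnder_le
      ⟨1, eventually_map.2 (Eventually.of_forall htanh)⟩).sub hcosh.inv_tendsto_atTop
  have hderiv := hasDerivAt_tanh_mul_sqrtSqAddFourSinhSq_sub_exp_sub_inv_cosh hν
  have hftc := integral_Ioi_of_hasDerivAt_of_tendsto (hderiv 0).continuousAt.continuousWithinAt
    (fun s _ => hderiv s)
    ((integrableOn_sqrtSqAddFourSinhSq_sub_exp ν).sub hint) hlim
  rw [integral_sub (integrableOn_sqrtSqAddFourSinhSq_sub_exp ν) hint] at hftc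
  simp only [tanh_zero, cosh_zero, zero_mul, inv_one] at hftc
  linarith

lemma sqrt_one_sub_sq_mul_tanh_sq {ν k : ℝ} (hν : 0 < ν) (hk : ν ^ 2 * (1 - k ^ 2) = 4)
    (s : ℝ) : √(1 - k ^ 2 * tanh s ^ 2) = sqrtSqAddFourSinhSq ν s / (ν * cosh s) := by
  have hW := sqrtSqAddFourSinhSq_pos hν.ne' s
  have hcosh := cosh_pos s
  rw [sqrt_eq_iff_mul_self_eq_of_pos (by positivity), ← sq, div_pow, sq_sqrtSqAddFourSinhSq,
    tanh_eq_sinh_div_cosh]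
  field_simp
  linear_combination (-ν ^ 2) * cosh_sq_sub_sinh_sq s - sinh s ^ 2 * hk

lemma inv_cosh_smul_ellipticIntegrand_gudermannian {ν k : ℝ} (hν : 0 < ν)
    (hk : ν ^ 2 * (1 - k ^ 2) = 4) (s : ℝ) :
    (cosh s)⁻¹ • (ν * (1 / √(1 - k ^ 2 * sin (gudermannian s) ^ 2))
        - ν * √(1 - k ^ 2 * sin (gudermannian s) ^ 2)) =
      ν ^ 2 / sqrtSqAddFourSinhSq ν s - sqrtSqAddFourSinhSq ν s / cosh s ^ 2 := by
  have hW := sqrtSqAddFourSinhSq_pos hν.ne' s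
  have hcosh := cosh_pos s
  rw [sin_gudermannian, sqrt_one_sub_sq_mul_tanh_sq hν hk, smul_eq_mul]
  field_simp

lemma continuous_one_div_sqrt_one_sub_sq_mul_sin_sq {k : ℝ} (hk : k ^ 2 < 1) :
    Continuous fun θ => 1 / √(1 - k ^ 2 * sin θ ^ 2) := by
  refine continuous_const.div (by fun_prop) fun θ => (sqrt_pos.2 ?_).ne'
  nlinarith [sin_sq_le_one θ, sq_nonneg k, sq_nonneg (sin θ)]

lemma mul_ellipticK_sub_ellipticE_eq_integral {ν k : ℝ} (hν : 0 < ν)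
    (hk : ν ^ 2 * (1 - k ^ 2) = 4) :
    ν * (ellipticK k - ellipticE k) =
      ∫ s in Ioi 0,
        (ν ^ 2 / sqrtSqAddFourSinhSq ν s - sqrtSqAddFourSinhSq ν s / cosh s ^ 2) := by
  have hK := continuous_one_div_sqrt_one_sub_sq_mul_sin_sq (k := k) (by nlinarith)
  have hE : Continuous fun θ => √(1 - k ^ 2 * sin θ ^ 2) := by fun_prop
  rw [ellipticK, ellipticE, ← intervalIntegral.integral_sub (hK.intervalIntegrable _ _)
    (hE.intervalIntegrable _ _), ← intervalIntegral.integral_const_mul,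
    intervalIntegral.integral_of_le (by positivity), integral_Ioc_eq_integral_Ioo]
  simp only [mul_sub]
  rw [integral_Ioo_zero_pi_div_two_eq_gudermannian]
  simp only [inv_cosh_smul_ellipticIntegrand_gudermannian hν hk]

lemma integrableOn_sq_div_sqrtSqAddFourSinhSq_sub {ν k : ℝ} (hν : 0 < ν)
    (hk : ν ^ 2 * (1 - k ^ 2) = 4) :
    IntegrableOn
      (fun s => ν ^ 2 / sqrtSqAddFourSinhSq ν s - sqrtSqAddFourSinhSq ν s / cosh s ^ 2)
      (Ioi 0) := by
  have hK := continuous_one_div_sqrt_one_sub_sq_mul_sin_sq (k := k) (by nlinarith)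
  have hcont : Continuous fun θ => ν * (1 / √(1 - k ^ 2 * sin θ ^ 2))
      - ν * √(1 - k ^ 2 * sin θ ^ 2) := by fun_prop
  have h := (hcont.integrableOn_Icc (μ := volume) (a := 0) (b := π / 2)).mono_set
    Ioo_subset_Icc_self
  rw [integrableOn_Ioo_zero_pi_div_two_iff_gudermannian] at h
  simpa only [inv_cosh_smul_ellipticIntegrand_gudermannian hν hk] using h

/-- For `ν > 2` and `k = √(ν² − 4)/ν`,
`∫₀^∞ (√(ν² − 2 + 2 cosh 2s) − eˢ) ds = ν(K(k) − E(k)) + 1`. -/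
theorem stmt_2 (ν : ℝ) (hν : 2 < ν) (k : ℝ) (hk : k = Real.sqrt (ν ^ 2 - 4) / ν) :
    IntegrableOn
      (fun s => Real.sqrt (ν ^ 2 - 2 + 2 * Real.cosh (2 * s)) - Real.exp s)
      (Set.Ioi 0) ∧
    ∫ s in Set.Ioi (0:ℝ),
        (Real.sqrt (ν ^ 2 - 2 + 2 * Real.cosh (2 * s)) - Real.exp s) =
      ν * (ellipticK k - ellipticE k) + 1 := by
  have hν₀ : 0 < ν := by linarith
  have hk' : ν ^ 2 * (1 - k ^ 2) = 4 := by
    rw [hk, div_pow, sq_sqrt (by nlinarith)]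
    field_simp
    ring
  simp only [sqrt_sub_two_add_two_cosh_two_mul]
  refine ⟨integrableOn_sqrtSqAddFourSinhSq_sub_exp ν, ?_⟩
  rw [integral_sqrtSqAddFourSinhSq_sub_exp hν₀.ne'
      (integrableOn_sq_div_sqrtSqAddFourSinhSq_sub hν₀ hk'),
    mul_ellipticK_sub_ellipticE_eq_integral hν₀ hk']
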